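/- Every T-bisimulation between T-coalgebras (X,ξ) and (Y,ζ) is a Λ-bisimulation, for any set Λ of monotone predicate liftings for T. -/

import Mathlib

open CategoryTheory

universe u

/-- A monotone predicate lifting for a `Set`-endofunctor `T`:
a natural transformation `Q → Q ∘ T^op` whose components are monotone. -/
structure PredLifting (T : Type u ⥤ Type u) where
  app : ∀ X : Type u, Set X → Set (T.obj X)
  natural : ∀ {X Y : Type u} (f : X → Y) (A : Set Y),
    app X (f ⁻¹' A) = T.map (TypeCat.ofHom f) ⁻¹' app Y A
  mono : ∀ (X : Type u) ⦃A B : Set X⦄, A ⊆ B → app X A ⊆ app X B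

/-- Relational image `S[A]`. -/
def RelImage {X Y : Type u} (S : X → Y → Prop) (A : Set X) : Set Y :=
  {y | ∃ x ∈ A, S x y}

/-- `S` is a `Λ`-simulation from the `T`-coalgebra `(X,ξ)` to `(Y,ζ)`. -/
def IsSim {T : Type u ⥤ Type u} (Λ : Set (PredLifting T))
    {X Y : Type u} (ξ : X → T.obj X) (ζ : Y → T.obj Y)
    (S : X → Y → Prop) : Prop :=
  ∀ x y, S x y → ∀ L ∈ Λ, ∀ A : Set X,
    ξ x ∈ L.app X A → ζ y ∈ L.app Y (RelImage S A)

/-- `S` is a `T`-bisimulation: it carries a coalgebra structure making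
both projections coalgebra morphisms. -/
def IsTBisim (T : Type u ⥤ Type u) {X Y : Type u}
    (ξ : X → T.obj X) (ζ : Y → T.obj Y) (S : X → Y → Prop) : Prop :=
  ∃ ρ : {p : X × Y // S p.1 p.2} → T.obj {p : X × Y // S p.1 p.2},
    (∀ s, T.map (TypeCat.ofHom (fun q : {p : X × Y // S p.1 p.2} => q.1.1)) (ρ s) = ξ s.1.1) ∧
    (∀ s, T.map (TypeCat.ofHom (fun q : {p : X × Y // S p.1 p.2} => q.1.2)) (ρ s) = ζ s.1.2)

/-! By naturality, `ξ x ∈ ⟦♥⟧ A` says `ρ (x, y) ∈ ⟦♥⟧ (p₁ ⁻¹' A)`; since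
`p₁ ⁻¹' A ⊆ p₂ ⁻¹' S[A]`, monotonicity and naturality again give `ζ y ∈ ⟦♥⟧ S[A]`.
The converse direction is the same argument with the two projections exchanged. -/

namespace PredLifting

variable {T : Type u ⥤ Type u}

theorem mem_app_preimage_iff (L : PredLifting T) {Z X : Type u} (f : Z → X) (A : Set X)
    (t : T.obj Z) : t ∈ L.app Z (f ⁻¹' A) ↔ T.map (TypeCat.ofHom f) t ∈ L.app X A := by
  rw [L.natural f A, Set.mem_preimage]

theorem map_mem_app_relImage (L : PredLifting T) {Z X Y : Type u} (f : Z → X) (g : Z → Y)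
    (S : X → Y → Prop) (hS : ∀ z, S (f z) (g z)) (A : Set X) (t : T.obj Z)
    (ht : T.map (TypeCat.ofHom f) t ∈ L.app X A) :
    T.map (TypeCat.ofHom g) t ∈ L.app Y (RelImage S A) := by
  have hsub : f ⁻¹' A ⊆ g ⁻¹' RelImage S A := fun z hz => ⟨f z, hz, hS z⟩
  rw [← mem_app_preimage_iff] at ht ⊢
  exact L.mono Z hsub ht

end PredLifting

theorem isSim_of_span {T : Type u ⥤ Type u} (Λ : Set (PredLifting T)) {X Y Z : Type u}
    {ξ : X → T.obj X} {ζ : Y → T.obj Y} (ρ : Z → T.obj Z) {f : Z → X} {g : Z → Y}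
    (hf : ∀ z, T.map (TypeCat.ofHom f) (ρ z) = ξ (f z))
    (hg : ∀ z, T.map (TypeCat.ofHom g) (ρ z) = ζ (g z))
    {S : X → Y → Prop} (hS : ∀ z, S (f z) (g z))
    (hspan : ∀ x y, S x y → ∃ z, f z = x ∧ g z = y) : IsSim Λ ξ ζ S := by
  intro x y hxy L _ A hx
  obtain ⟨z, rfl, rfl⟩ := hspan x y hxy
  rw [← hf] at hx
  rw [← hg]
  exact L.map_mem_app_relImage f g S hS A (ρ z) hx

theorem t_bisim_is_lambda_bisim {T : Type u ⥤ Type u}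
    (Λ : Set (PredLifting T)) {X Y : Type u}
    (ξ : X → T.obj X) (ζ : Y → T.obj Y) (S : X → Y → Prop)
    (h : IsTBisim T ξ ζ S) :
    IsSim Λ ξ ζ S ∧ IsSim Λ ζ ξ (fun y x => S x y) := by
  obtain ⟨ρ, h₁, h₂⟩ := h
  exact ⟨isSim_of_span Λ ρ h₁ h₂ (fun s => s.2) fun x y hxy => ⟨⟨(x, y), hxy⟩, rfl, rfl⟩,
    isSim_of_span Λ ρ h₂ h₁ (fun s => s.2) fun y x hxy => ⟨⟨(x, y), hxy⟩, rfl, rfl⟩⟩
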